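/- For natural number b ≥ 1 and nonnegative integer i, the Pochhammer ratio (3/2 - b)_i / (b)_i equals (-1)^{b+1} · ((2(b-1))! / 2^{b-1}) / [(2i-1)(2i-3)···(2i-2(b-1)+1) · (i+1)(i+2)···(i+b-1)] · C(2i,i) / 4^i, whenever the denominator is nonzero. -/

import Mathlib

open Real Finset

noncomputable def pochR (a : ℝ) : ℕ → ℝ
  | 0 => 1
  | (n+1) => pochR a n * (a + n)

/-!
Put `m = b - 1` and write `(a)ₙ` for the rising factorial. Expanding `(1/2 - m)_{n+m}` in the two
possible orders gives `(1/2 - m)ₙ (n + 1/2 - m)ₘ = (1/2 - m)ₘ (1/2)ₙ`. Here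
`(n + 1/2 - m)ₘ = 2⁻ᵐ ∏_{j<m} (2n - 2j - 1)` (a product of odd integers, never zero),
reflection gives `(1/2 - m)ₘ = (-1)ᵐ (1/2)ₘ`, and `4ᵏ k! (1/2)ₖ = (2k)!`. Finally both `m! (m+1)ₙ`
and `n! (n+1)ₘ` equal `(m+n)!`.
-/

open Polynomial
open scoped Nat

theorem pochR_eq_eval_ascPochhammer (a : ℝ) (n : ℕ) :
    pochR a n = (ascPochhammer ℝ n).eval a := by
  induction n with
  | zero => simp [pochR]
  | succ n ih => rw [pochR, ih, ascPochhammer_succ_eval]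

theorem ascPochhammer_eval_add {R : Type*} [CommSemiring R] (r : R) (m n : ℕ) :
    (ascPochhammer R (m + n)).eval r =
      (ascPochhammer R m).eval r * (ascPochhammer R n).eval (r + m) := by
  rw [← ascPochhammer_mul, eval_mul, eval_comp, eval_add, eval_X, eval_natCast]

theorem ascPochhammer_eval_eq_prod_range {R : Type*} [CommSemiring R] (r : R) (n : ℕ) :
    (ascPochhammer R n).eval r = ∏ j ∈ range n, (r + j) := by
  induction n with
  | zero => simp
  | succ n ih => rw [ascPochhammer_succ_eval, ih, prod_range_succ]

theorem factorial_mul_ascPochhammer_eval_succ_comm {R : Type*} [Semiring R] (m n : ℕ) :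
    (m ! : R) * (ascPochhammer R n).eval (m + 1 : R) =
      n ! * (ascPochhammer R m).eval (n + 1 : R) := by
  rw [factorial_mul_ascPochhammer, factorial_mul_ascPochhammer, Nat.add_comm]

theorem ascPochhammer_eval_neg {R : Type*} [Ring R] (r : R) (n : ℕ) :
    (ascPochhammer R n).eval (-r) = (-1) ^ n * (ascPochhammer R n).eval (r - n + 1) := by
  rw [ascPochhammer_eval_neg_eq_descPochhammer, descPochhammer_eval_eq_ascPochhammer]

theorem prod_range_sub_eq_ascPochhammer_eval {R : Type*} [CommRing R] (r : R) (n : ℕ) :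
    ∏ j ∈ range n, (r - j) = (ascPochhammer R n).eval (r - n + 1) := by
  rw [← descPochhammer_eval_eq_prod_range, descPochhammer_eval_eq_ascPochhammer]

theorem prod_range_two_mul_sub_odd_ne_zero {R : Type*} [CommRing R] [NoZeroDivisors R]
    [CharZero R] (n m : ℕ) : ∏ j ∈ range m, ((2 * n : R) - (2 * j + 1)) ≠ 0 :=
  prod_ne_zero_iff.2 fun j _ h => by
    have : (2 * n : ℤ) = 2 * j + 1 := by exact_mod_cast sub_eq_zero.1 h
    omega

section Field

variable {K : Type*} [Field K] [CharZero K]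

theorem ascPochhammer_eval_half_mul_four_pow_mul_factorial (n : ℕ) :
    (ascPochhammer K n).eval (1 / 2) * 4 ^ n * n ! = (2 * n)! := by
  induction n with
  | zero => simp
  | succ n ih =>
    rw [ascPochhammer_succ_eval, show 2 * (n + 1) = 2 * n + 1 + 1 by ring]
    push_cast [Nat.factorial_succ]
    linear_combination (4 * (n + 1) * (1 / 2 + n) : K) * ih

theorem ascPochhammer_eval_half_mul_four_pow (n : ℕ) :
    (ascPochhammer K n).eval (1 / 2) * 4 ^ n = (2 * n).choose n * n ! := by
  have hchoose : ((2 * n).choose n : K) * n ! * n ! = (2 * n)! := by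
    exact_mod_cast two_mul n ▸ Nat.add_choose_mul_factorial_mul_factorial n n
  refine mul_right_cancel₀ (Nat.cast_ne_zero.2 n.factorial_ne_zero) ?_
  rw [ascPochhammer_eval_half_mul_four_pow_mul_factorial, hchoose]

theorem ascPochhammer_eval_half_sub_mul_prod (m n : ℕ) :
    (ascPochhammer K n).eval (1 / 2 - m : K) * ∏ j ∈ range m, ((2 * n : K) - (2 * j + 1)) =
      (-1) ^ m * 2 ^ m * (ascPochhammer K m).eval (1 / 2) * (ascPochhammer K n).eval (1 / 2) := by
  have hsplit := ascPochhammer_eval_add (1 / 2 - m : K)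
  have hrefl : (ascPochhammer K m).eval (1 / 2 - m : K) =
      (-1) ^ m * (ascPochhammer K m).eval (1 / 2) := by
    rw [show (1 / 2 - m : K) = -(m - 1 / 2) by ring, ascPochhammer_eval_neg]
    congr 2
    ring
  have hprod : ∏ j ∈ range m, ((2 * n : K) - (2 * j + 1)) =
      2 ^ m * (ascPochhammer K m).eval (1 / 2 - m + n : K) := by
    rw [show (1 / 2 - m + n : K) = (n - 1 / 2) - m + 1 by ring,
      ← prod_range_sub_eq_ascPochhammer_eval, show (2 : K) ^ m = ∏ _j ∈ range m, 2 by simp,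
      ← prod_mul_distrib]
    refine prod_congr rfl fun j _ => ?_
    ring
  have hswap := hsplit m n
  rw [Nat.add_comm, hsplit n m, hrefl, sub_add_cancel] at hswap
  rw [hprod]
  linear_combination 2 ^ m * hswap

theorem ascPochhammer_eval_half_sub_mul_prod_mul_prod (m n : ℕ) :
    (ascPochhammer K n).eval (1 / 2 - m : K) * (∏ j ∈ range m, ((2 * n : K) - (2 * j + 1))) *
        (∏ j ∈ range m, ((n : K) + j + 1)) * 4 ^ n * 2 ^ m =
      (-1) ^ m * (2 * m)! * (2 * n).choose n * (ascPochhammer K n).eval (m + 1 : K) := by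
  have hcomm := factorial_mul_ascPochhammer_eval_succ_comm (R := K) m n
  rw [ascPochhammer_eval_eq_prod_range (n + 1 : K)] at hcomm
  simp only [add_right_comm (n : K) 1] at hcomm
  have hpow : (2 : K) ^ m * 2 ^ m = 4 ^ m := by rw [← mul_pow]; norm_num
  set Q := ∏ j ∈ range m, ((n : K) + j + 1)
  refine mul_left_cancel₀ (Nat.cast_ne_zero.2 m.factorial_ne_zero) ?_
  calc (m ! : K) * ((ascPochhammer K n).eval (1 / 2 - m : K) *
          (∏ j ∈ range m, ((2 * n : K) - (2 * j + 1))) * Q * 4 ^ n * 2 ^ m)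
      = (-1) ^ m * ((ascPochhammer K m).eval (1 / 2) * (2 ^ m * 2 ^ m) * m !) *
          ((ascPochhammer K n).eval (1 / 2) * 4 ^ n) * Q := by
        linear_combination (m ! * Q * 4 ^ n * 2 ^ m : K) *
          ascPochhammer_eval_half_sub_mul_prod (K := K) m n
    _ = (-1) ^ m * (2 * m)! * (2 * n).choose n * (n ! * Q) := by
        rw [hpow, ascPochhammer_eval_half_mul_four_pow_mul_factorial,
          ascPochhammer_eval_half_mul_four_pow]
        ring
    _ = m ! * ((-1) ^ m * (2 * m)! * (2 * n).choose n * (ascPochhammer K n).eval (m + 1 : K)) := by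
        rw [← hcomm]
        ring

end Field

theorem stmt10_general (b : ℕ) (hb : 1 ≤ b) (i : ℕ) :
    pochR (3/2 - b) i / pochR b i
    = (-1) ^ (b + 1) * ((Nat.factorial (2 * (b - 1)) : ℝ) / 2 ^ (b - 1)) /
        ((∏ j ∈ Finset.range (b-1), ((2 * i : ℝ) - (2 * j + 1))) *
          ∏ j ∈ Finset.range (b-1), ((i : ℝ) + j + 1))
        * (Nat.choose (2*i) i : ℝ) / 4 ^ i := by
  obtain ⟨m, rfl⟩ := Nat.exists_eq_add_of_le' hb
  have hP := prod_range_two_mul_sub_odd_ne_zero (R := ℝ) i m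
  have hQ : ∏ j ∈ range m, ((i : ℝ) + j + 1) ≠ 0 := prod_ne_zero_iff.2 fun j _ => by positivity
  have hY : (ascPochhammer ℝ i).eval (m + 1 : ℝ) ≠ 0 :=
    (ascPochhammer_pos _ _ (by positivity)).ne'
  have key := ascPochhammer_eval_half_sub_mul_prod_mul_prod (K := ℝ) m i
  rw [Nat.add_sub_cancel, pochR_eq_eval_ascPochhammer, pochR_eq_eval_ascPochhammer,
    show (3 / 2 - ((m + 1 : ℕ) : ℝ)) = 1 / 2 - m by push_cast; ring, pow_succ, pow_succ]
  -- keep `field_simp` from normalising the argument `1 / 2 - m`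
  generalize (ascPochhammer ℝ i).eval (1 / 2 - m : ℝ) = A at key ⊢
  push_cast
  field_simp
  linear_combination key

theorem stmt10 (b : ℕ) (hb : 1 ≤ b) (i : ℕ)
    (hden : (∏ j ∈ Finset.range (b-1), ((2 * i : ℝ) - (2 * j + 1))) ≠ 0) :
    pochR (3/2 - b) i / pochR b i
    = (-1) ^ (b + 1) * ((Nat.factorial (2 * (b - 1)) : ℝ) / 2 ^ (b - 1)) /
        ((∏ j ∈ Finset.range (b-1), ((2 * i : ℝ) - (2 * j + 1))) *
          ∏ j ∈ Finset.range (b-1), ((i : ℝ) + j + 1))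
        * (Nat.choose (2*i) i : ℝ) / 4 ^ i :=
  stmt10_general b hb i
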